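/- arXiv:2308.13776 — 3 statements merged into one kernel-verified Lean document; each statement's English description precedes it below -/
import Mathlib

section
/- For every γ ∈ (0, 1/μ̄] and every k ≥ k̄: F(x^{k+1}) + (1/2)⟨d^k, 𝒢_k d^k⟩ ≤ Φ_γ(z^k) ≤ F(x^k) + (L_f/2)‖d^k‖² + ς_k, and moreover Φ_γ(z^k) ≥ F(y^k) + (1/2)⟨d^k, 𝒢_k d^k⟩. -/
/-!
With `D = id`, `G_γ(x, ·)` is the proximal-gradient model
`f x + ⟪∇f x, · - x⟫ + ‖· - x‖² / (2γ) + g`, so `F_γ(x) ≤ F(x)` (take `y = x`), and, because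
`‖G_k‖ ≤ μ̄ ≤ 1/γ`, the model `Θ_k` lies below it, whence `Θ_k(x̄ᵏ) ≤ F_γ(xᵏ)`. The descent lemma
gives `F(yᵏ) + ½⟪dᵏ, G_k dᵏ⟫ ≤ Θ_k(yᵏ) + (L_f/2)‖dᵏ‖²` and inexactness gives
`Θ_k(yᵏ) ≤ Θ_k(x̄ᵏ) + ς_k`. Finally the update never makes `F(xᵏ⁺¹)` exceed `F(yᵏ)`.
-/

open Set Filter
open scoped RealInnerProductSpace ENNReal

noncomputable section

attribute [local instance] Classical.propDecidable

variable {X : Type*} [NormedAddCommGroup X] [InnerProductSpace ℝ X] [FiniteDimensional ℝ X]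

/-- `g` extended by `+∞` outside its domain `s`. -/
def extE (g : X → ℝ) (s : Set X) (x : X) : EReal := if x ∈ s then (g x : EReal) else ⊤

/-- The objective `F = f + g`, extended-real valued. -/
def FE (f g : X → ℝ) (s : Set X) (x : X) : EReal := (f x : EReal) + extE g s x

/-- The strongly convex model `Θ_k` with base point `xk` and metric `G`, evaluated at `z`. -/
def Theta (f g : X → ℝ) (fgrad : X → X) (G : X →L[ℝ] X) (xk z : X) : ℝ :=
  f xk + ⟪fgrad xk, z - xk⟫ + (1/2) * ⟪z - xk, G (z - xk)⟫ + g z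

/-- `φ_{γ,D}(x) = (1/(2γ)) ⟪ x, D x ⟫ - f x`. -/
def phiGD (γ : ℝ) (D : X →L[ℝ] X) (f : X → ℝ) (x : X) : ℝ :=
  (1 / (2 * γ)) * ⟪x, D x⟫ - f x

/-- `∇φ_{γ,D}(x) = γ⁻¹ D x - ∇f x`. -/
def phiGDgrad (γ : ℝ) (D : X →L[ℝ] X) (fgrad : X → X) (x : X) : X :=
  (1 / γ) • D x - fgrad x

/-- Bregman function `B_{γ,D}(y, x)`, equal to `+∞` when `x ∉ cl (dom g)`. -/
def BregE (γ : ℝ) (D : X →L[ℝ] X) (f : X → ℝ) (fgrad : X → X) (s : Set X)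
    (y x : X) : EReal :=
  if x ∈ closure s then
    ((phiGD γ D f y - phiGD γ D f x - ⟪phiGDgrad γ D fgrad x, y - x⟫ : ℝ) : EReal)
  else ⊤

/-- `G_{γ,D}(x, y) = F(y) + B_{γ,D}(y, x)`. -/
def GE (γ : ℝ) (D : X →L[ℝ] X) (f : X → ℝ) (fgrad : X → X) (g : X → ℝ) (s : Set X)
    (x y : X) : EReal := FE f g s y + BregE γ D f fgrad s y x

/-- The forward-backward envelope `F_{γ,D}(x) = inf_y G_{γ,D}(x, y)`. -/
def FBenvE (γ : ℝ) (D : X →L[ℝ] X) (f : X → ℝ) (fgrad : X → X) (g : X → ℝ) (s : Set X)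
    (x : X) : EReal := ⨅ y : X, GE γ D f fgrad g s x y

section

variable {E : Type*} {f g : E → ℝ} {s : Set E} {x : E}

theorem FE_of_mem (hx : x ∈ s) : FE f g s x = ((f x + g x : ℝ) : EReal) := by
  simp [FE, extE, hx, EReal.coe_add]

theorem FE_of_notMem (hx : x ∉ s) : FE f g s x = ⊤ := by
  simp [FE, extE, hx]

theorem mem_of_FE_le_coe {c : ℝ} (h : FE f g s x ≤ c) : x ∈ s := by
  by_contra hx
  rw [FE_of_notMem hx] at h
  exact (EReal.coe_lt_top c).not_ge h

theorem FE_le_of_update {x' y z : E}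
    (h : (FE f g s y < FE f g s z ∧ x' = y) ∨ (¬ FE f g s y < FE f g s z ∧ x' = z)) :
    FE f g s x' ≤ FE f g s y := by
  rcases h with ⟨-, rfl⟩ | ⟨h, rfl⟩
  exacts [le_rfl, not_lt.1 h]

end

section

variable {E : Type*} [NormedAddCommGroup E] [InnerProductSpace ℝ E]

theorem real_inner_map_self_le_of_opNorm_le {A : E →L[ℝ] E} {c : ℝ} (hA : ‖A‖ ≤ c) (u : E) :
    ⟪u, A u⟫ ≤ c * ‖u‖ ^ 2 :=
  calc ⟪u, A u⟫ ≤ ‖u‖ * ‖A u‖ := real_inner_le_norm _ _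
    _ ≤ ‖u‖ * (‖A‖ * ‖u‖) := by gcongr; exact A.le_opNorm u
    _ ≤ c * ‖u‖ ^ 2 := by nlinarith [norm_nonneg u, sq_nonneg ‖u‖]

theorem Convex.le_add_inner_add_of_lipschitzOnWith_gradient [CompleteSpace E] {S : Set E}
    (hS : Convex ℝ S) {f : E → ℝ} {f' : E → E} {L : NNReal}
    (hf : ∀ z ∈ S, HasGradientAt f (f' z) z) (hL : LipschitzOnWith L f' S)
    {x y : E} (hx : x ∈ S) (hy : y ∈ S) :
    f y ≤ f x + ⟪f' x, y - x⟫ + L / 2 * ‖y - x‖ ^ 2 := by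
  set d := y - x
  have hseg : ∀ t ∈ Icc (0 : ℝ) 1, x + t • d ∈ S := fun t ht => hS.add_smul_sub_mem hx hy ht
  have hderiv : ∀ t ∈ Icc (0 : ℝ) 1,
      HasDerivAt (fun t : ℝ => f (x + t • d)) ⟪f' (x + t • d), d⟫ t := fun t ht =>
    ((hf _ (hseg t ht)).hasFDerivAt.comp_hasDerivAt t
      (((hasDerivAt_id t).smul_const d).const_add x)).congr_deriv (by simp)
  have hmodel : ∀ t : ℝ, HasDerivAt (fun t : ℝ => f x + t * ⟪f' x, d⟫ + L / 2 * ‖d‖ ^ 2 * t ^ 2)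
      (⟪f' x, d⟫ + L * ‖d‖ ^ 2 * t) t := fun t =>
    ((((hasDerivAt_id t).mul_const ⟪f' x, d⟫).const_add (f x)).add
      ((hasDerivAt_pow 2 t).const_mul (L / 2 * ‖d‖ ^ 2))).congr_deriv (by simp; ring)
  have hslope : ∀ t ∈ Icc (0 : ℝ) 1, ⟪f' (x + t • d), d⟫ ≤ ⟪f' x, d⟫ + L * ‖d‖ ^ 2 * t :=
    fun t ht => calc
      ⟪f' (x + t • d), d⟫ = ⟪f' x, d⟫ + ⟪f' (x + t • d) - f' x, d⟫ := by
        rw [inner_sub_left]; ring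
      _ ≤ ⟪f' x, d⟫ + ‖f' (x + t • d) - f' x‖ * ‖d‖ := by gcongr; exact real_inner_le_norm _ _
      _ ≤ ⟪f' x, d⟫ + L * ‖x + t • d - x‖ * ‖d‖ := by
        gcongr; simpa only [dist_eq_norm] using hL.dist_le_mul _ (hseg t ht) _ hx
      _ = ⟪f' x, d⟫ + L * ‖d‖ ^ 2 * t := by
        rw [add_sub_cancel_left, norm_smul, Real.norm_of_nonneg ht.1]; ring
  have := image_le_of_deriv_right_le_deriv_boundary
    (fun t ht => (hderiv t ht).continuousAt.continuousWithinAt)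
    (fun t ht => (hderiv t (Ico_subset_Icc_self ht)).hasDerivWithinAt) (by simp)
    (fun t _ => (hmodel t).continuousAt.continuousWithinAt)
    (fun t _ => (hmodel t).hasDerivWithinAt)
    (fun t ht => hslope t (Ico_subset_Icc_self ht)) (right_mem_Icc.2 zero_le_one)
  simpa [d] using this

variable {f g : E → ℝ} {fgrad : E → E} {s : Set E} {γ : ℝ} {x : E}

theorem GE_id_of_mem {y : E} (hx : x ∈ closure s) (hy : y ∈ s) :
    GE γ (ContinuousLinearMap.id ℝ E) f fgrad g s x y
      = ((f x + ⟪fgrad x, y - x⟫ + 1 / (2 * γ) * ‖y - x‖ ^ 2 + g y : ℝ) : EReal) := by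
  rw [GE, BregE, if_pos hx, FE_of_mem hy, ← EReal.coe_add, EReal.coe_eq_coe_iff]
  simp only [phiGD, phiGDgrad, ContinuousLinearMap.id_apply, real_inner_self_eq_norm_sq,
    inner_sub_left, inner_sub_right, real_inner_smul_left, norm_sub_sq_real, real_inner_comm x y]
  ring

theorem GE_of_notMem (D : E →L[ℝ] E) {y : E} (hy : y ∉ s) : GE γ D f fgrad g s x y = ⊤ := by
  rw [GE, FE_of_notMem hy, BregE]
  split_ifs
  exacts [EReal.top_add_coe _, EReal.top_add_top]

theorem FBenvE_id_le (hx : x ∈ s) :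
    FBenvE γ (ContinuousLinearMap.id ℝ E) f fgrad g s x ≤ ((f x + g x : ℝ) : EReal) :=
  iInf_le_of_le x (by rw [GE_id_of_mem (subset_closure hx) hx]; simp)

theorem le_FBenvE_id (hx : x ∈ closure s) {c : ℝ}
    (h : ∀ z ∈ s, c ≤ f x + ⟪fgrad x, z - x⟫ + 1 / (2 * γ) * ‖z - x‖ ^ 2 + g z) :
    (c : EReal) ≤ FBenvE γ (ContinuousLinearMap.id ℝ E) f fgrad g s x :=
  le_iInf fun z => by
    by_cases hz : z ∈ s
    · rw [GE_id_of_mem hx hz]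
      exact EReal.coe_le_coe (h z hz)
    · rw [GE_of_notMem _ hz]
      exact le_top

theorem Theta_le_of_opNorm_le {G : E →L[ℝ] E} (hG : ‖G‖ ≤ 1 / γ) (xk z : E) :
    Theta f g fgrad G xk z ≤ f xk + ⟪fgrad xk, z - xk⟫ + 1 / (2 * γ) * ‖z - xk‖ ^ 2 + g z := by
  have := real_inner_map_self_le_of_opNorm_le hG (z - xk)
  rw [Theta, show 1 / (2 * γ) = 1 / 2 * (1 / γ) by ring]
  linarith

theorem Theta_le_FBenvE_id {G : E →L[ℝ] E} {xbar : E} (hx : x ∈ closure s) (hG : ‖G‖ ≤ 1 / γ)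
    (hmin : ∀ z ∈ s, Theta f g fgrad G x xbar ≤ Theta f g fgrad G x z) :
    (Theta f g fgrad G x xbar : EReal) ≤ FBenvE γ (ContinuousLinearMap.id ℝ E) f fgrad g s x :=
  le_FBenvE_id hx fun z hz => (hmin z hz).trans (Theta_le_of_opNorm_le hG x z)

end

theorem potential_sandwich_general
    (f g : X → ℝ) (domg O : Set X) (fgrad : X → X)
    (hfgrad : ∀ z ∈ O, HasGradientAt f (fgrad z) z)
    (σ β : ℝ)
    (eps : ℕ → ℝ)
    (kbar : ℕ)
    (x y xbar : ℕ → X) (G : ℕ → X →L[ℝ] X) (m : ℕ → ℕ)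
    (hx0 : x 0 ∈ domg)
    (hxbar : ∀ k, xbar k ∈ domg ∧ ∀ z ∈ domg,
      Theta f g fgrad (G k) (x k) (xbar k) ≤ Theta f g fgrad (G k) (x k) z)
    (hy : ∀ k, y k ∈ domg ∧
      Theta f g fgrad (G k) (x k) (y k) < Theta f g fgrad (G k) (x k) (x k) ∧
      Theta f g fgrad (G k) (x k) (y k) - Theta f g fgrad (G k) (x k) (xbar k)
        ≤ eps k * ‖y k - x k‖ ^ 2)
    (hls : ∀ k,
      (FE f g domg (x k + β ^ (m k) • (y k - x k))
        ≤ ((f (x k) + g (x k) - σ * β ^ (m k) * ‖y k - x k‖ ^ 2 : ℝ) : EReal)) ∧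
      ∀ j < m k, ¬ (FE f g domg (x k + β ^ j • (y k - x k))
        ≤ ((f (x k) + g (x k) - σ * β ^ j * ‖y k - x k‖ ^ 2 : ℝ) : EReal)))
    (hupd : ∀ k,
      (FE f g domg (y k) < FE f g domg (x k + β ^ (m k) • (y k - x k)) ∧ x (k+1) = y k) ∨
      ((¬ FE f g domg (y k) < FE f g domg (x k + β ^ (m k) • (y k - x k))) ∧
        x (k+1) = x k + β ^ (m k) • (y k - x k)))
    (μbar : ℝ) (hμbar : 0 < μbar) (hGub : ∀ k, ‖G k‖ ≤ μbar)
    (Γ : Set X) (hΓconv : Convex ℝ Γ) (hΓO : Γ ⊆ O)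
    (hΓx : ∀ k, x k ∈ Γ) (hΓy : ∀ k, y k ∈ Γ)
    (Lf : ℝ) (hLf : 0 < Lf) (hLip : LipschitzOnWith (Real.toNNReal Lf) fgrad Γ)
    (γ : ℝ) (hγ : 0 < γ) (hγle : γ ≤ 1 / μbar)
    (Fenv : X → ℝ)
    (hFenv : ∀ z ∈ closure domg,
      (Fenv z : EReal) = FBenvE γ (ContinuousLinearMap.id ℝ X) f fgrad g domg z) :
    ∀ k, kbar ≤ k →
      (FE f g domg (x (k + 1)) + (((1/2) * ⟪y k - x k, G k (y k - x k)⟫ : ℝ) : EReal)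
        ≤ ((Fenv (x k) + (Lf/2) * ‖y k - x k‖ ^ 2 + eps k * ‖y k - x k‖ ^ 2 : ℝ) : EReal)) ∧
      (Fenv (x k) + (Lf/2) * ‖y k - x k‖ ^ 2 + eps k * ‖y k - x k‖ ^ 2
        ≤ f (x k) + g (x k) + (Lf/2) * ‖y k - x k‖ ^ 2 + eps k * ‖y k - x k‖ ^ 2) ∧
      (f (y k) + g (y k) + (1/2) * ⟪y k - x k, G k (y k - x k)⟫
        ≤ Fenv (x k) + (Lf/2) * ‖y k - x k‖ ^ 2 + eps k * ‖y k - x k‖ ^ 2) := by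
  intro k _
  have hxk : x k ∈ domg := by
    cases k with
    | zero => exact hx0
    | succ n =>
      rcases hupd n with ⟨-, h⟩ | ⟨-, h⟩ <;> rw [h]
      exacts [(hy n).1, mem_of_FE_le_coe (hls n).1]
  have hG : ‖G k‖ ≤ 1 / γ := (hGub k).trans ((le_one_div hγ hμbar).1 hγle)
  have hdesc := hΓconv.le_add_inner_add_of_lipschitzOnWith_gradient
    (fun z hz => hfgrad z (hΓO hz)) hLip (hΓx k) (hΓy k)
  rw [Real.coe_toNNReal _ hLf.le] at hdesc
  have hupper : Fenv (x k) ≤ f (x k) + g (x k) := by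
    exact_mod_cast (hFenv _ (subset_closure hxk)).trans_le (FBenvE_id_le hxk)
  have hlower : Theta f g fgrad (G k) (x k) (xbar k) ≤ Fenv (x k) := by
    exact_mod_cast (Theta_le_FBenvE_id (subset_closure hxk) hG (hxbar k).2).trans_eq
      (hFenv _ (subset_closure hxk)).symm
  have hyk : f (y k) + g (y k) + (1/2) * ⟪y k - x k, G k (y k - x k)⟫
      ≤ Fenv (x k) + (Lf/2) * ‖y k - x k‖ ^ 2 + eps k * ‖y k - x k‖ ^ 2 := by
    have hinexact := (hy k).2.2
    unfold Theta at hinexact hlower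
    linarith
  refine ⟨?_, by linarith, hyk⟩
  calc FE f g domg (x (k + 1)) + (((1/2) * ⟪y k - x k, G k (y k - x k)⟫ : ℝ) : EReal)
      ≤ ((f (y k) + g (y k) : ℝ) : EReal)
          + (((1/2) * ⟪y k - x k, G k (y k - x k)⟫ : ℝ) : EReal) := by
        gcongr
        rw [← FE_of_mem (hy k).1]
        exact FE_le_of_update (hupd k)
    _ ≤ _ := by exact_mod_cast hyk

/-- sandwich inequalities for `Φ_γ(z^k)`. -/
theorem potential_sandwich
    (f g : X → ℝ) (domg O : Set X) (fgrad : X → X)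
    (hdom : domg.Nonempty) (hO : IsOpen O) (hclO : closure domg ⊆ O)
    (hgconv : ConvexOn ℝ domg g) (hgcont : ContinuousOn g domg)
    (hglsc : LowerSemicontinuous (extE g domg))
    (hflsc : LowerSemicontinuous f)
    (hfC2 : ContDiffOn ℝ 2 f O)
    (hfgrad : ∀ z ∈ O, HasGradientAt f (fgrad z) z)
    (hFlb : ∃ c : ℝ, ∀ z ∈ domg, c ≤ f z + g z)
    (μ σ β : ℝ) (hμ : 0 < μ) (hβ : 0 < β ∧ β < 1) (hσ : 0 < σ ∧ σ < (1/2) * min 1 μ)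
    (eps : ℕ → ℝ) (heps : ∀ k, 0 < eps k) (hepsbd : ∃ C : ℝ, ∀ k, eps k ≤ C)
    (kbar : ℕ) (hkbar : ∀ k, kbar ≤ k → eps k ≤ μ / 10)
    (x y xbar : ℕ → X) (G : ℕ → X →L[ℝ] X) (m : ℕ → ℕ)
    (hx0 : x 0 ∈ domg)
    (hGsa : ∀ k, ∀ u v : X, ⟪G k u, v⟫ = ⟪u, G k v⟫)
    (hGlb : ∀ k, ∀ u : X, μ * ‖u‖ ^ 2 ≤ ⟪u, G k u⟫)
    (hxbar : ∀ k, xbar k ∈ domg ∧ ∀ z ∈ domg,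
      Theta f g fgrad (G k) (x k) (xbar k) ≤ Theta f g fgrad (G k) (x k) z)
    (hy : ∀ k, y k ∈ domg ∧
      Theta f g fgrad (G k) (x k) (y k) < Theta f g fgrad (G k) (x k) (x k) ∧
      Theta f g fgrad (G k) (x k) (y k) - Theta f g fgrad (G k) (x k) (xbar k)
        ≤ eps k * ‖y k - x k‖ ^ 2)
    (hls : ∀ k,
      (FE f g domg (x k + β ^ (m k) • (y k - x k))
        ≤ ((f (x k) + g (x k) - σ * β ^ (m k) * ‖y k - x k‖ ^ 2 : ℝ) : EReal)) ∧
      ∀ j < m k, ¬ (FE f g domg (x k + β ^ j • (y k - x k))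
        ≤ ((f (x k) + g (x k) - σ * β ^ j * ‖y k - x k‖ ^ 2 : ℝ) : EReal)))
    (hupd : ∀ k,
      (FE f g domg (y k) < FE f g domg (x k + β ^ (m k) • (y k - x k)) ∧ x (k+1) = y k) ∨
      ((¬ FE f g domg (y k) < FE f g domg (x k + β ^ (m k) • (y k - x k))) ∧
        x (k+1) = x k + β ^ (m k) • (y k - x k)))
    (hxbdd : ∃ R : ℝ, ∀ k, ‖x k‖ ≤ R)
    (μbar : ℝ) (hμbar : 0 < μbar) (hGub : ∀ k, ‖G k‖ ≤ μbar)
    (Γ : Set X) (hΓc : IsCompact Γ) (hΓconv : Convex ℝ Γ) (hΓO : Γ ⊆ O)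
    (hΓx : ∀ k, x k ∈ Γ) (hΓy : ∀ k, y k ∈ Γ)
    (Lf : ℝ) (hLf : 0 < Lf) (hLip : LipschitzOnWith (Real.toNNReal Lf) fgrad Γ)
    (γ : ℝ) (hγ : 0 < γ) (hγle : γ ≤ 1 / μbar)
    (Fenv : X → ℝ)
    (hFenv : ∀ z ∈ closure domg,
      (Fenv z : EReal) = FBenvE γ (ContinuousLinearMap.id ℝ X) f fgrad g domg z) :
    ∀ k, kbar ≤ k →
      (FE f g domg (x (k + 1)) + (((1/2) * ⟪y k - x k, G k (y k - x k)⟫ : ℝ) : EReal)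
        ≤ ((Fenv (x k) + (Lf/2) * ‖y k - x k‖ ^ 2 + eps k * ‖y k - x k‖ ^ 2 : ℝ) : EReal)) ∧
      (Fenv (x k) + (Lf/2) * ‖y k - x k‖ ^ 2 + eps k * ‖y k - x k‖ ^ 2
        ≤ f (x k) + g (x k) + (Lf/2) * ‖y k - x k‖ ^ 2 + eps k * ‖y k - x k‖ ^ 2) ∧
      (f (y k) + g (y k) + (1/2) * ⟪y k - x k, G k (y k - x k)⟫
        ≤ Fenv (x k) + (Lf/2) * ‖y k - x k‖ ^ 2 + eps k * ‖y k - x k‖ ^ 2) :=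
  potential_sandwich_general f g domg O fgrad hfgrad σ β eps kbar x y xbar G m hx0 hxbar hy hls hupd
    μbar hμbar hGub Γ hΓconv hΓO hΓx hΓy Lf hLf hLip γ hγ hγle Fenv hFenv
end
end

section
/- For every γ ∈ (0, 1/μ̄] there exists a constant b > 0 such that ‖∇Φ_γ(z^k)‖ ≤ b‖x^k − x^{k+1}‖ for all k ≥ k̄. -/
open Set Filter
open scoped RealInnerProductSpace ENNReal

noncomputable section

attribute [local instance] Classical.propDecidable

variable {X : Type*} [NormedAddCommGroup X] [InnerProductSpace ℝ X] [FiniteDimensional ℝ X]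

/-- `p` is the proximal point `prox^D_{γ g}(u)`, i.e. the minimizer over `dom g` of
`z ↦ (1/(2γ)) ⟪ z - u, D (z - u) ⟫ + g z`. -/
def IsProxPt (γ : ℝ) (D : X →L[ℝ] X) (g : X → ℝ) (s : Set X) (u p : X) : Prop :=
  p ∈ s ∧ ∀ z ∈ s,
    (1 / (2 * γ)) * ⟪p - u, D (p - u)⟫ + g p ≤
      (1 / (2 * γ)) * ⟪z - u, D (z - u)⟫ + g z

/-!
By strong convexity of `Θ_k`, the inexact step `yᵏ` lies within `‖dᵏ‖` of the exact model
minimizer `x̄ᵏ` once `εₖ ≤ μ/2`, so `‖x̄ᵏ - xᵏ‖ ≤ 2‖dᵏ‖`; adding the variational inequalities of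
`Θ_k` and of the proximal problem gives `‖xᵏ - prox_{γg}(xᵏ - γ∇f(xᵏ))‖ ≤ 2‖x̄ᵏ - xᵏ‖` when
`γ‖𝒢_k‖ ≤ 1`. Hence every component of `∇Φ_γ(zᵏ)` is `O(‖dᵏ‖)`. Conversely, the descent lemma for
the `L_f`-Lipschitz gradient makes the Armijo test pass as soon as `βʲ L_f ≤ μ/2 - σ`, so the
accepted stepsizes stay above a fixed `β^N` and `‖xᵏ - xᵏ⁺¹‖ ≥ β^N ‖dᵏ‖`.
-/

open scoped NNReal Topology

section

variable {E : Type*} [NormedAddCommGroup E] [InnerProductSpace ℝ E]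

theorem nonneg_of_forall_add_mul_nonneg {a c : ℝ} (h : ∀ t ∈ Ioc (0 : ℝ) 1, 0 ≤ a + t * c) :
    0 ≤ a := by
  have hlim : Tendsto (fun t : ℝ => a + t * c) (𝓝[>] 0) (𝓝 a) := by
    have hcont : Continuous fun t : ℝ => a + t * c := by fun_prop
    simpa using (hcont.tendsto 0).mono_left nhdsWithin_le_nhds
  exact ge_of_tendsto hlim (eventually_of_mem (Ioc_mem_nhdsGT one_pos) h)

theorem Real.sqrt_sq_add_sq_add_sq_le {a b c : ℝ} (ha : 0 ≤ a) (hb : 0 ≤ b) (hc : 0 ≤ c) :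
    √(a ^ 2 + b ^ 2 + c ^ 2) ≤ a + b + c := by
  refine Real.sqrt_le_iff.2 ⟨by positivity, ?_⟩
  nlinarith [mul_nonneg ha hb, mul_nonneg ha hc, mul_nonneg hb hc]

theorem ConvexOn.map_add_smul_sub_le {g : E → ℝ} {s : Set E} {x y : E} {t : ℝ}
    (hg : ConvexOn ℝ s g) (hx : x ∈ s) (hy : y ∈ s) (ht : t ∈ Icc (0 : ℝ) 1) :
    g (x + t • (y - x)) ≤ g x + t * (g y - g x) := by
  have h := hg.2 hx hy (sub_nonneg.2 ht.2) ht.1 (sub_add_cancel 1 t)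
  rw [show (1 - t) • x + t • y = x + t • (y - x) by module, smul_eq_mul, smul_eq_mul] at h
  linarith

theorem image_le_add_inner_add_of_lipschitzOnWith_gradient [CompleteSpace E] {f : E → ℝ}
    {f' : E → E} {s : Set E} {L : ℝ≥0} (hs : Convex ℝ s) (hf : ∀ z ∈ s, HasGradientAt f (f' z) z)
    (hL : LipschitzOnWith L f' s) {x y : E} (hx : x ∈ s) (hy : y ∈ s) :
    f y ≤ f x + ⟪f' x, y - x⟫ + L * ‖y - x‖ ^ 2 := by
  have hseg : segment ℝ x y ⊆ s := hs.segment_subset hx hy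
  have hbound : ∀ z ∈ segment ℝ x y,
      ‖InnerProductSpace.toDual ℝ E (f' z) - InnerProductSpace.toDual ℝ E (f' x)‖
        ≤ L * ‖y - x‖ := by
    intro z hz
    rw [← map_sub, LinearIsometryEquiv.norm_map, ← dist_eq_norm, ← dist_eq_norm']
    exact (hL.dist_le_mul z (hseg hz) x hx).trans
      (mul_le_mul_of_nonneg_left (segment_subset_closedBall_left x y hz) L.2)
  have hmv := (convex_segment x y).norm_image_sub_le_of_norm_hasFDerivWithin_le'
    (fun z hz => (hf z (hseg hz)).hasFDerivAt.hasFDerivWithinAt) hbound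
    (left_mem_segment ℝ x y) (right_mem_segment ℝ x y)
  rw [InnerProductSpace.toDual_apply_apply, Real.norm_eq_abs] at hmv
  nlinarith [le_abs_self (f y - f x - ⟪f' x, y - x⟫)]

/-- Up to additive constants, both `Θ_k` (with `A = 𝒢_k`, `l = ∇f(xᵏ)`, `x₀ = xᵏ`) and the
proximal objective have this form. -/
def quadModel (A : E →L[ℝ] E) (l x₀ z : E) : ℝ :=
  ⟪l, z - x₀⟫ + (1 / 2) * ⟪z - x₀, A (z - x₀)⟫

section QuadModel

variable {g : E → ℝ} {s : Set E} {A : E →L[ℝ] E} {l x₀ p q y z : E}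

theorem quadModel_add_smul (hA : (A : E →ₗ[ℝ] E).IsSymmetric) (l x₀ p w : E) (t : ℝ) :
    quadModel A l x₀ (p + t • w) =
      quadModel A l x₀ p + t * ⟪l + A (p - x₀), w⟫ + t ^ 2 / 2 * ⟪w, A w⟫ := by
  have hsymm : ⟪p - x₀, A w⟫ = ⟪A (p - x₀), w⟫ := (hA _ _).symm
  have hcomm : ⟪w, A (p - x₀)⟫ = ⟪A (p - x₀), w⟫ := real_inner_comm _ _
  simp only [quadModel, show p + t • w - x₀ = (p - x₀) + t • w by abel, map_add, map_smul,
    inner_add_left, inner_add_right, real_inner_smul_left, real_inner_smul_right, hsymm, hcomm]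
  ring

theorem IsMinOn.quadModel_variational_ineq
    (hmin : IsMinOn (fun z => quadModel A l x₀ z + g z) s p) (hg : ConvexOn ℝ s g)
    (hA : (A : E →ₗ[ℝ] E).IsSymmetric) (hp : p ∈ s) (hz : z ∈ s) :
    0 ≤ ⟪l + A (p - x₀), z - p⟫ + g z - g p := by
  refine nonneg_of_forall_add_mul_nonneg (c := ⟪z - p, A (z - p)⟫ / 2) fun t ht => ?_
  have ht' : t ∈ Icc (0 : ℝ) 1 := Ioc_subset_Icc_self ht
  have hq := isMinOn_iff.1 hmin _ (hg.1.add_smul_sub_mem hp hz ht')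
  have hgt := hg.map_add_smul_sub_le hp hz ht'
  simp only [quadModel_add_smul hA] at hq
  have : 0 ≤ t * ((⟪l + A (p - x₀), z - p⟫ + g z - g p) + t * (⟪z - p, A (z - p)⟫ / 2)) := by
    nlinarith
  exact nonneg_of_mul_nonneg_right (by linarith) ht.1

theorem IsMinOn.quadModel_growth (hmin : IsMinOn (fun z => quadModel A l x₀ z + g z) s p)
    (hg : ConvexOn ℝ s g) (hA : (A : E →ₗ[ℝ] E).IsSymmetric) (hp : p ∈ s) (hz : z ∈ s) :
    quadModel A l x₀ p + g p + ⟪z - p, A (z - p)⟫ / 2 ≤ quadModel A l x₀ z + g z := by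
  have hexp := quadModel_add_smul hA l x₀ p (z - p) 1
  rw [one_smul, add_sub_cancel] at hexp
  linarith [hmin.quadModel_variational_ineq hg hA hp hz]

theorem IsMinOn.norm_sub_le_of_quadModel_sub_le {μ ε : ℝ}
    (hmin : IsMinOn (fun z => quadModel A l x₀ z + g z) s p) (hg : ConvexOn ℝ s g)
    (hA : (A : E →ₗ[ℝ] E).IsSymmetric) (hAμ : ∀ u, μ * ‖u‖ ^ 2 ≤ ⟪u, A u⟫) (hμ : 0 < μ)
    (hε : ε ≤ μ / 2) (hp : p ∈ s) (hy : y ∈ s)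
    (hyε : quadModel A l x₀ y + g y - (quadModel A l x₀ p + g p) ≤ ε * ‖y - x₀‖ ^ 2) :
    ‖y - p‖ ≤ ‖y - x₀‖ := by
  have hgrowth := hmin.quadModel_growth hg hA hp hy
  have hsq : μ * ‖y - p‖ ^ 2 ≤ μ * ‖y - x₀‖ ^ 2 := by
    nlinarith [hAμ (y - p), mul_le_mul_of_nonneg_right hε (sq_nonneg ‖y - x₀‖)]
  exact (pow_le_pow_iff_left₀ (norm_nonneg _) (norm_nonneg _) two_ne_zero).1
    (le_of_mul_le_mul_left hsq hμ)

theorem isSymmetric_smul_id (c : ℝ) :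
    ((c • ContinuousLinearMap.id ℝ E : E →L[ℝ] E) : E →ₗ[ℝ] E).IsSymmetric := fun u v => by
  simp [real_inner_smul_left, real_inner_smul_right]

/-- A forward–backward step with stepsize `γ ≤ 1 / ‖A‖` moves at most twice as far as the exact
minimizer of the model with metric `A`. -/
theorem IsMinOn.norm_sub_le_two_mul_of_isMinOn_prox {γ : ℝ} (hγ : 0 < γ)
    (hq : IsMinOn (fun z => quadModel A l x₀ z + g z) s q)
    (hp : IsMinOn (fun z => quadModel ((1 / γ) • ContinuousLinearMap.id ℝ E) 0 (x₀ - γ • l) z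
      + g z) s p)
    (hg : ConvexOn ℝ s g) (hA : (A : E →ₗ[ℝ] E).IsSymmetric) (hApos : ∀ u, 0 ≤ ⟪u, A u⟫)
    (hAγ : ‖A‖ ≤ 1 / γ) (hqs : q ∈ s) (hps : p ∈ s) :
    ‖p - x₀‖ ≤ 2 * ‖q - x₀‖ := by
  have hvq := hq.quadModel_variational_ineq hg hA hqs hps
  have hvp := hp.quadModel_variational_ineq hg (isSymmetric_smul_id _) hps hqs
  set a := p - x₀
  set b := q - x₀
  have hpq : p - q = a - b := by simp only [a, b]; abel
  have hqp : q - p = b - a := by simp only [a, b]; abel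
  have hprox : (1 / γ) • (p - (x₀ - γ • l)) = (1 / γ) • a + l := by
    rw [show p - (x₀ - γ • l) = a + γ • l by simp only [a]; abel, smul_add, smul_smul,
      one_div_mul_cancel hγ.ne', one_smul]
  simp only [smul_apply, ContinuousLinearMap.id_apply, zero_add, hprox, hpq, hqp] at hvq hvp
  -- adding the two variational inequalities cancels `g` and `l`
  have hsum : (1 / γ) * ‖a‖ ^ 2 + ⟪b, A b⟫ ≤ ⟪A b, a⟫ + (1 / γ) * ⟪a, b⟫ := by
    simp only [inner_add_left, inner_sub_right, real_inner_smul_left,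
      real_inner_self_eq_norm_sq] at hvq hvp
    linarith [real_inner_comm b (A b)]
  have hAba : ⟪A b, a⟫ ≤ 1 / γ * ‖b‖ * ‖a‖ :=
    (real_inner_le_norm _ _).trans (mul_le_mul_of_nonneg_right
      (((A.le_opNorm b).trans (mul_le_mul_of_nonneg_right hAγ (norm_nonneg b)))) (norm_nonneg a))
  have hab : (1 / γ) * ⟪a, b⟫ ≤ 1 / γ * (‖a‖ * ‖b‖) :=
    mul_le_mul_of_nonneg_left (real_inner_le_norm a b) (by positivity)
  have hsq : (1 / γ) * ‖a‖ ^ 2 ≤ (1 / γ) * (2 * ‖b‖ * ‖a‖) := by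
    nlinarith [hApos b]
  have hsq' := le_of_mul_le_mul_left hsq (by positivity)
  nlinarith [norm_nonneg a, norm_nonneg b]

theorem Theta_eq_quadModel (f : E → ℝ) (fgrad : E → E) (G : E →L[ℝ] E) (xk z : E) :
    Theta f g fgrad G xk z = f xk + (quadModel G (fgrad xk) xk z + g z) := by
  simp only [Theta, quadModel]
  ring

theorem isMinOn_quadModel_of_Theta_le {f : E → ℝ} {fgrad : E → E} {G : E →L[ℝ] E} {xk : E}
    (h : ∀ z ∈ s, Theta f g fgrad G xk p ≤ Theta f g fgrad G xk z) :
    IsMinOn (fun z => quadModel G (fgrad xk) xk z + g z) s p :=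
  isMinOn_iff.2 fun z hz => by simpa only [Theta_eq_quadModel, add_le_add_iff_left] using h z hz

theorem IsProxPt.isMinOn_quadModel {γ : ℝ} {D : E →L[ℝ] E} {u : E}
    (h : IsProxPt γ D g s u p) : IsMinOn (fun z => quadModel ((1 / γ) • D) 0 u z + g z) s p := by
  have hcoef : ∀ r : ℝ, 1 / 2 * (1 / γ * r) = 1 / (2 * γ) * r := fun r => by ring
  refine isMinOn_iff.2 fun z hz => ?_
  simpa only [quadModel, inner_zero_left, zero_add, smul_apply, real_inner_smul_right, hcoef]
    using h.2 z hz

end QuadModel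

section LineSearch

variable {g : E → ℝ} {s : Set E} {x y : E} {t : ℝ}

theorem FE_add_smul_sub_le_of_Theta_lt [CompleteSpace E] {f : E → ℝ} {fgrad : E → E}
    {G : E →L[ℝ] E} {Γ : Set E} {L : ℝ≥0} {μ σ : ℝ} (hg : ConvexOn ℝ s g) (hΓ : Convex ℝ Γ)
    (hf : ∀ z ∈ Γ, HasGradientAt f (fgrad z) z) (hL : LipschitzOnWith L fgrad Γ)
    (hGμ : ∀ u, μ * ‖u‖ ^ 2 ≤ ⟪u, G u⟫) (hxs : x ∈ s) (hys : y ∈ s) (hxΓ : x ∈ Γ) (hyΓ : y ∈ Γ)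
    (hΘ : Theta f g fgrad G x y < Theta f g fgrad G x x) (ht : t ∈ Icc (0 : ℝ) 1)
    (htL : t * L ≤ μ / 2 - σ) :
    FE f g s (x + t • (y - x)) ≤ ((f x + g x - σ * t * ‖y - x‖ ^ 2 : ℝ) : EReal) := by
  rw [FE, extE, if_pos (hg.1.add_smul_sub_mem hxs hys ht), ← EReal.coe_add,
    EReal.coe_le_coe_iff]
  have hf := image_le_add_inner_add_of_lipschitzOnWith_gradient hΓ hf hL hxΓ
    (hΓ.add_smul_sub_mem hxΓ hyΓ ht)
  rw [add_sub_cancel_left, real_inner_smul_right, norm_smul, Real.norm_of_nonneg ht.1,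
    mul_pow] at hf
  have hg := hg.map_add_smul_sub_le hxs hys ht
  have hΘ' : ⟪fgrad x, y - x⟫ + g y - g x ≤ -(μ / 2) * ‖y - x‖ ^ 2 := by
    simp only [Theta, sub_self, inner_zero_right, map_zero, mul_zero, add_zero] at hΘ
    linarith [hGμ (y - x)]
  nlinarith [mul_le_mul_of_nonneg_left hΘ' ht.1,
    mul_le_mul_of_nonneg_right htL (mul_nonneg ht.1 (sq_nonneg ‖y - x‖))]

theorem mul_norm_sub_le_norm_sub_of_eq_or_eq {x' : E} (ht : t ∈ Icc (0 : ℝ) 1)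
    (h : x' = y ∨ x' = x + t • (y - x)) : t * ‖y - x‖ ≤ ‖x - x'‖ := by
  rcases h with rfl | rfl
  · rw [norm_sub_rev]
    exact mul_le_of_le_one_left (norm_nonneg _) ht.2
  · rw [sub_add_cancel_left, norm_neg, norm_smul, Real.norm_of_nonneg ht.1]

theorem Convex.iterate_mem {x y : ℕ → E} {t : ℕ → ℝ} (hs : Convex ℝ s) (hx₀ : x 0 ∈ s)
    (hy : ∀ k, y k ∈ s) (ht : ∀ k, t k ∈ Icc (0 : ℝ) 1)
    (hx : ∀ k, x (k + 1) = y k ∨ x (k + 1) = x k + t k • (y k - x k)) (k : ℕ) : x k ∈ s := by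
  induction k with
  | zero => exact hx₀
  | succ k ih =>
    rcases hx k with h | h
    · exact h ▸ hy k
    · exact h ▸ hs.add_smul_sub_mem ih (hy k) (ht k)

end LineSearch

theorem sqrt_potential_grad_le {γ L ε M C : ℝ} {H : E →L[ℝ] E} {r d : E} (hγ : 0 < γ)
    (hL : 0 ≤ L) (hH : ‖H‖ ≤ M) (hr : ‖r‖ ≤ 4 * ‖d‖) (hε : ε ≤ C) :
    √(‖(1 / γ) • (r - γ • H r) - L • d‖ ^ 2 + ‖L • d‖ ^ 2 + (2 * √(ε * ‖d‖ ^ 2)) ^ 2)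
      ≤ (4 * (1 / γ + M) + 2 * L + 2 * √C) * ‖d‖ := by
  have hLd : ‖L • d‖ = L * ‖d‖ := by rw [norm_smul, Real.norm_of_nonneg hL]
  have hfirst : ‖(1 / γ) • (r - γ • H r) - L • d‖ ≤ (1 / γ + M) * ‖r‖ + L * ‖d‖ := by
    rw [smul_sub, smul_smul, one_div_mul_cancel hγ.ne', one_smul, ← hLd]
    calc _ ≤ ‖(1 / γ) • r‖ + ‖H r‖ + ‖L • d‖ := by
          grw [norm_sub_le, norm_sub_le]
      _ ≤ 1 / γ * ‖r‖ + M * ‖r‖ + ‖L • d‖ := by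
          rw [norm_smul, Real.norm_of_nonneg (by positivity)]
          grw [H.le_opNorm, hH]
      _ = _ := by ring
  have hthird : √(ε * ‖d‖ ^ 2) ≤ √C * ‖d‖ := by
    rw [← Real.sqrt_sq (norm_nonneg d), ← Real.sqrt_mul' _ (sq_nonneg _),
      Real.sqrt_sq (norm_nonneg d)]
    exact Real.sqrt_le_sqrt (mul_le_mul_of_nonneg_right hε (sq_nonneg _))
  have hM : 0 ≤ 1 / γ + M := add_nonneg (by positivity) ((norm_nonneg H).trans hH)
  calc _ ≤ ‖(1 / γ) • (r - γ • H r) - L • d‖ + ‖L • d‖ + 2 * √(ε * ‖d‖ ^ 2) :=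
        Real.sqrt_sq_add_sq_add_sq_le (norm_nonneg _) (norm_nonneg _) (by positivity)
    _ ≤ (1 / γ + M) * (4 * ‖d‖) + L * ‖d‖ + L * ‖d‖ + 2 * (√C * ‖d‖) := by
        gcongr
        · exact hfirst.trans (by gcongr)
        · exact hLd.le
    _ = _ := by ring

end

theorem potential_gradient_bound_general
    (f g : X → ℝ) (domg O : Set X) (fgrad : X → X)
    (hgconv : ConvexOn ℝ domg g)
    (hfgrad : ∀ z ∈ O, HasGradientAt f (fgrad z) z)
    (μ σ β : ℝ) (hμ : 0 < μ) (hβ : 0 < β ∧ β < 1) (hσ : 0 < σ ∧ σ < (1/2) * min 1 μ)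
    (eps : ℕ → ℝ)
    (kbar : ℕ) (hkbar : ∀ k, kbar ≤ k → eps k ≤ μ / 10)
    (x y xbar : ℕ → X) (G : ℕ → X →L[ℝ] X) (m : ℕ → ℕ)
    (hx0 : x 0 ∈ domg)
    (hGsa : ∀ k, ∀ u v : X, ⟪G k u, v⟫ = ⟪u, G k v⟫)
    (hGlb : ∀ k, ∀ u : X, μ * ‖u‖ ^ 2 ≤ ⟪u, G k u⟫)
    (hxbar : ∀ k, xbar k ∈ domg ∧ ∀ z ∈ domg,
      Theta f g fgrad (G k) (x k) (xbar k) ≤ Theta f g fgrad (G k) (x k) z)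
    (hy : ∀ k, y k ∈ domg ∧
      Theta f g fgrad (G k) (x k) (y k) < Theta f g fgrad (G k) (x k) (x k) ∧
      Theta f g fgrad (G k) (x k) (y k) - Theta f g fgrad (G k) (x k) (xbar k)
        ≤ eps k * ‖y k - x k‖ ^ 2)
    (hls : ∀ k,
      (FE f g domg (x k + β ^ (m k) • (y k - x k))
        ≤ ((f (x k) + g (x k) - σ * β ^ (m k) * ‖y k - x k‖ ^ 2 : ℝ) : EReal)) ∧
      ∀ j < m k, ¬ (FE f g domg (x k + β ^ j • (y k - x k))
        ≤ ((f (x k) + g (x k) - σ * β ^ j * ‖y k - x k‖ ^ 2 : ℝ) : EReal)))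
    (hupd : ∀ k,
      (FE f g domg (y k) < FE f g domg (x k + β ^ (m k) • (y k - x k)) ∧ x (k+1) = y k) ∨
      ((¬ FE f g domg (y k) < FE f g domg (x k + β ^ (m k) • (y k - x k))) ∧
        x (k+1) = x k + β ^ (m k) • (y k - x k)))
    (μbar : ℝ) (hμbar : 0 < μbar) (hGub : ∀ k, ‖G k‖ ≤ μbar)
    (Γ : Set X) (hΓc : IsCompact Γ) (hΓconv : Convex ℝ Γ) (hΓO : Γ ⊆ O)
    (hΓx : ∀ k, x k ∈ Γ) (hΓy : ∀ k, y k ∈ Γ)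
    (Lf : ℝ) (hLf : 0 < Lf) (hLip : LipschitzOnWith (Real.toNNReal Lf) fgrad Γ)
    (γ : ℝ) (hγ : 0 < γ) (hγle : γ ≤ 1 / μbar)
    (proxg : X → X)
    (hproxg : ∀ u : X, IsProxPt γ (ContinuousLinearMap.id ℝ X) g domg u (proxg u))
    (fhess : X → X →L[ℝ] X)
    (hfhessc : ContinuousOn fhess O) :
    ∃ b > (0:ℝ), ∀ k, kbar ≤ k →
      Real.sqrt (‖(1/γ) • ((x k - proxg (x k - γ • fgrad (x k))) -
            γ • fhess (x k) (x k - proxg (x k - γ • fgrad (x k)))) -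
          Lf • (y k - x k)‖ ^ 2 +
        ‖Lf • (y k - x k)‖ ^ 2 +
        (2 * Real.sqrt (eps k * ‖y k - x k‖ ^ 2)) ^ 2)
      ≤ b * ‖x k - x (k + 1)‖ := by
  obtain ⟨M, hM⟩ := hΓc.exists_bound_of_continuousOn (hfhessc.mono hΓO)
  have hσμ : 0 < μ / 2 - σ := by linarith [min_le_right 1 μ, hσ.2]
  obtain ⟨N, hN⟩ := exists_pow_lt_of_lt_one (div_pos hσμ hLf) hβ.2
  have hβpow : ∀ j, β ^ j ∈ Icc (0 : ℝ) 1 :=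
    fun j => ⟨pow_nonneg hβ.1.le j, pow_le_one₀ hβ.1.le hβ.2.le⟩
  have hupd' := fun k => (hupd k).imp And.right And.right
  have hxs := hgconv.1.iterate_mem hx0 (fun k => (hy k).1) (fun k => hβpow (m k)) hupd'
  set K := 4 * (1 / γ + M) + 2 * Lf + 2 * √(μ / 10)
  have hK : 0 < K := by
    linarith [one_div_pos.2 hγ, (norm_nonneg _).trans (hM _ (hΓx 0)), Real.sqrt_nonneg (μ / 10)]
  have hb : 0 < K / β ^ N := div_pos hK (pow_pos hβ.1 N)
  refine ⟨K / β ^ N, hb, fun k hk => ?_⟩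
  have hxbar_min := isMinOn_quadModel_of_Theta_le (hxbar k).2
  have hyxbar : ‖y k - xbar k‖ ≤ ‖y k - x k‖ :=
    hxbar_min.norm_sub_le_of_quadModel_sub_le (ε := eps k) hgconv (hGsa k) (hGlb k) hμ
      (by linarith [hkbar k hk]) (hxbar k).1 (hy k).1
      (by simpa only [Theta_eq_quadModel, add_sub_add_left_eq_sub] using (hy k).2.2)
  have hprox : ‖proxg (x k - γ • fgrad (x k)) - x k‖ ≤ 2 * ‖xbar k - x k‖ :=
    hxbar_min.norm_sub_le_two_mul_of_isMinOn_prox hγ (hproxg _).isMinOn_quadModel hgconv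
      (hGsa k) (fun u => (mul_nonneg hμ.le (sq_nonneg _)).trans (hGlb k u))
      ((hGub k).trans ((le_one_div hμbar hγ).2 hγle)) (hxbar k).1 (hproxg _).1
  have hm : m k ≤ N := not_lt.1 fun hlt => (hls k).2 N hlt <|
    FE_add_smul_sub_le_of_Theta_lt hgconv hΓconv (fun z hz => hfgrad z (hΓO hz)) hLip (hGlb k)
      (hxs k) (hy k).1 (hΓx k) (hΓy k) (hy k).2.1 (hβpow N)
      (by rw [Real.coe_toNNReal _ hLf.le]; exact ((lt_div_iff₀ hLf).1 hN).le)
  have hstep : β ^ N * ‖y k - x k‖ ≤ ‖x k - x (k + 1)‖ :=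
    (mul_le_mul_of_nonneg_right (pow_le_pow_of_le_one hβ.1.le hβ.2.le hm) (norm_nonneg _)).trans
      (mul_norm_sub_le_norm_sub_of_eq_or_eq (hβpow (m k)) (hupd' k))
  have hr : ‖x k - proxg (x k - γ • fgrad (x k))‖ ≤ 4 * ‖y k - x k‖ := by
    rw [norm_sub_rev]
    linarith [norm_sub_le_norm_sub_add_norm_sub (xbar k) (y k) (x k), norm_sub_rev (xbar k) (y k)]
  calc _ ≤ K * ‖y k - x k‖ :=
        sqrt_potential_grad_le hγ hLf.le (hM _ (hΓx k)) hr (hkbar k hk)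
    _ = K / β ^ N * (β ^ N * ‖y k - x k‖) := by field_simp [(pow_pos hβ.1 N).ne']
    _ ≤ K / β ^ N * ‖x k - x (k + 1)‖ := mul_le_mul_of_nonneg_left hstep hb.le

/-- gradient lower bound for the iterate gap:
`‖∇Φ_γ(z^k)‖ ≤ b ‖x^k - x^{k+1}‖`. -/
theorem potential_gradient_bound
    (f g : X → ℝ) (domg O : Set X) (fgrad : X → X)
    (hdom : domg.Nonempty) (hO : IsOpen O) (hclO : closure domg ⊆ O)
    (hgconv : ConvexOn ℝ domg g) (hgcont : ContinuousOn g domg)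
    (hglsc : LowerSemicontinuous (extE g domg))
    (hflsc : LowerSemicontinuous f)
    (hfC2 : ContDiffOn ℝ 2 f O)
    (hfgrad : ∀ z ∈ O, HasGradientAt f (fgrad z) z)
    (hFlb : ∃ c : ℝ, ∀ z ∈ domg, c ≤ f z + g z)
    (μ σ β : ℝ) (hμ : 0 < μ) (hβ : 0 < β ∧ β < 1) (hσ : 0 < σ ∧ σ < (1/2) * min 1 μ)
    (eps : ℕ → ℝ) (heps : ∀ k, 0 < eps k) (hepsbd : ∃ C : ℝ, ∀ k, eps k ≤ C)
    (kbar : ℕ) (hkbar : ∀ k, kbar ≤ k → eps k ≤ μ / 10)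
    (x y xbar : ℕ → X) (G : ℕ → X →L[ℝ] X) (m : ℕ → ℕ)
    (hx0 : x 0 ∈ domg)
    (hGsa : ∀ k, ∀ u v : X, ⟪G k u, v⟫ = ⟪u, G k v⟫)
    (hGlb : ∀ k, ∀ u : X, μ * ‖u‖ ^ 2 ≤ ⟪u, G k u⟫)
    (hxbar : ∀ k, xbar k ∈ domg ∧ ∀ z ∈ domg,
      Theta f g fgrad (G k) (x k) (xbar k) ≤ Theta f g fgrad (G k) (x k) z)
    (hy : ∀ k, y k ∈ domg ∧
      Theta f g fgrad (G k) (x k) (y k) < Theta f g fgrad (G k) (x k) (x k) ∧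
      Theta f g fgrad (G k) (x k) (y k) - Theta f g fgrad (G k) (x k) (xbar k)
        ≤ eps k * ‖y k - x k‖ ^ 2)
    (hls : ∀ k,
      (FE f g domg (x k + β ^ (m k) • (y k - x k))
        ≤ ((f (x k) + g (x k) - σ * β ^ (m k) * ‖y k - x k‖ ^ 2 : ℝ) : EReal)) ∧
      ∀ j < m k, ¬ (FE f g domg (x k + β ^ j • (y k - x k))
        ≤ ((f (x k) + g (x k) - σ * β ^ j * ‖y k - x k‖ ^ 2 : ℝ) : EReal)))
    (hupd : ∀ k,
      (FE f g domg (y k) < FE f g domg (x k + β ^ (m k) • (y k - x k)) ∧ x (k+1) = y k) ∨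
      ((¬ FE f g domg (y k) < FE f g domg (x k + β ^ (m k) • (y k - x k))) ∧
        x (k+1) = x k + β ^ (m k) • (y k - x k)))
    (hxbdd : ∃ R : ℝ, ∀ k, ‖x k‖ ≤ R)
    (μbar : ℝ) (hμbar : 0 < μbar) (hGub : ∀ k, ‖G k‖ ≤ μbar)
    (Γ : Set X) (hΓc : IsCompact Γ) (hΓconv : Convex ℝ Γ) (hΓO : Γ ⊆ O)
    (hΓx : ∀ k, x k ∈ Γ) (hΓy : ∀ k, y k ∈ Γ)
    (Lf : ℝ) (hLf : 0 < Lf) (hLip : LipschitzOnWith (Real.toNNReal Lf) fgrad Γ)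
    (γ : ℝ) (hγ : 0 < γ) (hγle : γ ≤ 1 / μbar)
    (proxg : X → X)
    (hproxg : ∀ u : X, IsProxPt γ (ContinuousLinearMap.id ℝ X) g domg u (proxg u))
    (fhess : X → X →L[ℝ] X) (hfhess : ∀ z ∈ O, HasFDerivAt fgrad (fhess z) z)
    (hfhessc : ContinuousOn fhess O) :
    ∃ b > (0:ℝ), ∀ k, kbar ≤ k →
      Real.sqrt (‖(1/γ) • ((x k - proxg (x k - γ • fgrad (x k))) -
            γ • fhess (x k) (x k - proxg (x k - γ • fgrad (x k)))) -
          Lf • (y k - x k)‖ ^ 2 +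
        ‖Lf • (y k - x k)‖ ^ 2 +
        (2 * Real.sqrt (eps k * ‖y k - x k‖ ^ 2)) ^ 2)
      ≤ b * ‖x k - x (k + 1)‖ :=
  potential_gradient_bound_general f g domg O fgrad hgconv hfgrad μ σ β hμ hβ hσ eps kbar hkbar x y
    xbar G m hx0 hGsa hGlb hxbar hy hls hupd μbar hμbar hGub Γ hΓc hΓconv hΓO hΓx hΓy Lf hLf hLip γ
    hγ hγle proxg hproxg fhess hfhessc
end
end

section
/- Let x ∈ dom g, let 𝒢 be a self-adjoint linear operator on 𝕏 with 𝒢 ⪰ μ̲I for some μ̲ > 0, and let γ > 0 satisfy γ‖𝒢‖ ≤ 1. Define Θ(z) = f(x) + ⟨∇f(x), z − x⟩ + (1/2)⟨z − x, 𝒢(z − x)⟩ + g(z), let x̄ be its unique minimizer, and let p = prox_{γg}(x − γ∇f(x)). Then ‖x̄ − p‖ ≤ √((1 − μ̲γ)/(γμ̲)) · ‖x̄ − x‖. -/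
open Set Filter
open scoped RealInnerProductSpace ENNReal

noncomputable section

attribute [local instance] Classical.propDecidable

variable {X : Type*} [NormedAddCommGroup X] [InnerProductSpace ℝ X] [FiniteDimensional ℝ X]

/-!
The proximal point `p` minimizes the model of `F` at `x` with metric `I/γ`, and `x̄` the model `Θ`
with metric `𝒢`. Strong convexity of the prox objective makes `p` beat `x̄` in it by at least
`‖x̄ - p‖²`, while `x̄` beats `p` in `Θ`. Adding the two comparisons leaves
`‖x̄ - p‖² ≤ q(x̄ - x) - q(p - x)` with `q(w) = ‖w‖² - γ⟪w, 𝒢 w⟫`, and `0 ≤ q(w) ≤ (1 - γμ)‖w‖²`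
because `γ‖𝒢‖ ≤ 1` and `𝒢 ⪰ μ I`. Finally `1 - t ≤ (1 - t) / t` for every `t > 0`.
-/

open Topology

section

variable {E : Type*} [NormedAddCommGroup E] [InnerProductSpace ℝ E]

lemma nonneg_of_forall_Ioc_add_mul_nonneg {s c : ℝ}
    (h : ∀ t ∈ Ioc (0 : ℝ) 1, 0 ≤ s + t * c) : 0 ≤ s := by
  have hlim : Tendsto (fun t : ℝ => s + t * c) (𝓝[>] 0) (𝓝 s) := by
    have : Continuous fun t : ℝ => s + t * c := by fun_prop
    simpa using (this.tendsto 0).mono_left nhdsWithin_le_nhds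
  exact ge_of_tendsto hlim (Filter.mem_of_superset (Ioc_mem_nhdsGT one_pos) h)

lemma mul_real_inner_self_apply_le_sq_norm {γ : ℝ} (hγ : 0 ≤ γ) {G : E →L[ℝ] E}
    (hγG : γ * ‖G‖ ≤ 1) (w : E) : γ * ⟪w, G w⟫ ≤ ‖w‖ ^ 2 :=
  calc γ * ⟪w, G w⟫ ≤ γ * (‖w‖ * ‖G w‖) := by gcongr; exact real_inner_le_norm w (G w)
    _ ≤ γ * (‖w‖ * (‖G‖ * ‖w‖)) := by gcongr; exact G.le_opNorm w
    _ = γ * ‖G‖ * ‖w‖ ^ 2 := by ring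
    _ ≤ ‖w‖ ^ 2 := mul_le_of_le_one_left (sq_nonneg _) hγG

lemma isProxPt_id_iff {γ : ℝ} (hγ : 0 < γ) {g : E → ℝ} {s : Set E} {u p : E} :
    IsProxPt γ (ContinuousLinearMap.id ℝ E) g s u p ↔
      p ∈ s ∧ ∀ z ∈ s, ‖p - u‖ ^ 2 + 2 * γ * g p ≤ ‖z - u‖ ^ 2 + 2 * γ * g z := by
  have key : ∀ w : E, ∀ a : ℝ,
      1 / (2 * γ) * ⟪w, ContinuousLinearMap.id ℝ E w⟫ + a = (‖w‖ ^ 2 + 2 * γ * a) / (2 * γ) := by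
    intro w a
    rw [ContinuousLinearMap.id_apply, real_inner_self_eq_norm_sq]
    field_simp
  simp only [IsProxPt, key, div_le_div_iff_of_pos_right (by positivity : (0 : ℝ) < 2 * γ)]

/-- Variational inequality of the proximal point: `u - p ∈ γ ∂g(p)`. -/
lemma IsProxPt.inner_sub_le {γ : ℝ} (hγ : 0 < γ) {g : E → ℝ} {s : Set E} {u p : E}
    (hp : IsProxPt γ (ContinuousLinearMap.id ℝ E) g s u p) (hg : ConvexOn ℝ s g)
    {z : E} (hz : z ∈ s) : ⟪u - p, z - p⟫ ≤ γ * (g z - g p) := by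
  obtain ⟨hps, hpmin⟩ := (isProxPt_id_iff hγ).1 hp
  suffices 0 ≤ 2 * (⟪p - u, z - p⟫ + γ * (g z - g p)) by
    rw [← neg_sub p u, inner_neg_left]; linarith
  refine nonneg_of_forall_Ioc_add_mul_nonneg (c := ‖z - p‖ ^ 2) fun t ⟨ht0, ht1⟩ => ?_
  have hzt : (1 - t) • p + t • z = p + t • (z - p) := by
    rw [smul_sub, sub_smul, one_smul]; abel
  have h1t : 0 ≤ 1 - t := by linarith
  have hmin := hpmin _ (hg.1 hps hz h1t ht0.le (sub_add_cancel 1 t))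
  have hgt := hg.2 hps hz h1t ht0.le (sub_add_cancel 1 t)
  rw [smul_eq_mul, smul_eq_mul, hzt] at hgt
  rw [hzt, add_sub_right_comm, norm_add_sq_real, inner_smul_right, norm_smul,
    Real.norm_of_nonneg ht0.le] at hmin
  nlinarith

/-- Three-point inequality: the prox objective `‖· - u‖² + 2γ g` is `2`-strongly convex. -/
lemma IsProxPt.sq_norm_sub_add_le {γ : ℝ} (hγ : 0 < γ) {g : E → ℝ} {s : Set E} {u p : E}
    (hp : IsProxPt γ (ContinuousLinearMap.id ℝ E) g s u p) (hg : ConvexOn ℝ s g)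
    {z : E} (hz : z ∈ s) :
    ‖p - u‖ ^ 2 + 2 * γ * g p + ‖z - p‖ ^ 2 ≤ ‖z - u‖ ^ 2 + 2 * γ * g z := by
  have hvar := hp.inner_sub_le hγ hg hz
  have hsplit : ‖z - u‖ ^ 2 = ‖z - p‖ ^ 2 - 2 * ⟪u - p, z - p⟫ + ‖p - u‖ ^ 2 := by
    rw [← sub_sub_sub_cancel_right z u p, norm_sub_sq_real, real_inner_comm, norm_sub_rev u p]
  linarith

lemma sq_norm_sub_add_eq_Theta (f g : E → ℝ) (fgrad : E → E) (G : E →L[ℝ] E) (γ : ℝ)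
    (x₀ z : E) :
    ‖z - (x₀ - γ • fgrad x₀)‖ ^ 2 + 2 * γ * g z =
      2 * γ * Theta f g fgrad G x₀ z + (‖z - x₀‖ ^ 2 - γ * ⟪z - x₀, G (z - x₀)⟫)
        + (γ ^ 2 * ‖fgrad x₀‖ ^ 2 - 2 * γ * f x₀) := by
  rw [sub_sub_eq_add_sub, add_sub_right_comm, norm_add_sq_real, inner_smul_right, norm_smul,
    Real.norm_eq_abs, mul_pow, sq_abs, Theta, real_inner_comm (fgrad x₀)]
  ring

end

lemma one_sub_le_one_sub_div {t : ℝ} (ht : 0 < t) : 1 - t ≤ (1 - t) / t := by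
  rw [le_div_iff₀ ht]
  nlinarith [sq_nonneg (1 - t)]

lemma le_sqrt_mul_of_sq_le_mul_sq {d r c : ℝ} (hd : 0 ≤ d) (hr : 0 ≤ r)
    (h : d ^ 2 ≤ c * r ^ 2) : d ≤ Real.sqrt c * r :=
  calc d = Real.sqrt (d ^ 2) := (Real.sqrt_sq hd).symm
    _ ≤ Real.sqrt (c * r ^ 2) := Real.sqrt_le_sqrt h
    _ = Real.sqrt c * r := by rw [Real.sqrt_mul' c (sq_nonneg r), Real.sqrt_sq hr]

theorem minimizer_prox_distance_general
    (f g : X → ℝ) (domg : Set X) (fgrad : X → X)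
    (hgconv : ConvexOn ℝ domg g)
    (μ : ℝ) (hμ : 0 < μ) (G : X →L[ℝ] X)
    (hGlb : ∀ u : X, μ * ‖u‖ ^ 2 ≤ ⟪u, G u⟫)
    (γ : ℝ) (hγ : 0 < γ) (hγG : γ * ‖G‖ ≤ 1)
    (x0 : X)
    (xbar : X)
    (hxbar : xbar ∈ domg ∧ ∀ z ∈ domg, Theta f g fgrad G x0 xbar ≤ Theta f g fgrad G x0 z)
    (p : X) (hp : IsProxPt γ (ContinuousLinearMap.id ℝ X) g domg (x0 - γ • fgrad x0) p) :
    ‖xbar - p‖ ≤ Real.sqrt ((1 - μ * γ) / (γ * μ)) * ‖xbar - x0‖ := by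
  have hthree := hp.sq_norm_sub_add_le hγ hgconv hxbar.1
  rw [sq_norm_sub_add_eq_Theta f g fgrad G, sq_norm_sub_add_eq_Theta f g fgrad G] at hthree
  have hΘ := mul_le_mul_of_nonneg_left (hxbar.2 p hp.1) (by positivity : (0 : ℝ) ≤ 2 * γ)
  have hGp := mul_real_inner_self_apply_le_sq_norm hγ.le hγG (p - x0)
  have hGx := mul_le_mul_of_nonneg_left (hGlb (xbar - x0)) hγ.le
  have hsq : ‖xbar - p‖ ^ 2 ≤ (1 - μ * γ) * ‖xbar - x0‖ ^ 2 := by linarith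
  refine le_sqrt_mul_of_sq_le_mul_sq (norm_nonneg _) (norm_nonneg _) (hsq.trans ?_)
  rw [mul_comm γ μ]
  exact mul_le_mul_of_nonneg_right (one_sub_le_one_sub_div (by positivity)) (sq_nonneg _)

/-- distance between the minimizer `x̄` of `Θ` and the proximal-gradient
point `p = prox_{γ g}(x - γ ∇f(x))`. -/
theorem minimizer_prox_distance
    (f g : X → ℝ) (domg O : Set X) (fgrad : X → X)
    (hdom : domg.Nonempty) (hO : IsOpen O) (hclO : closure domg ⊆ O)
    (hgconv : ConvexOn ℝ domg g) (hgcont : ContinuousOn g domg)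
    (hglsc : LowerSemicontinuous (extE g domg))
    (hflsc : LowerSemicontinuous f)
    (hfC2 : ContDiffOn ℝ 2 f O)
    (hfgrad : ∀ z ∈ O, HasGradientAt f (fgrad z) z)
    (hFlb : ∃ c : ℝ, ∀ z ∈ domg, c ≤ f z + g z)
    (μ : ℝ) (hμ : 0 < μ) (G : X →L[ℝ] X)
    (hGsa : ∀ u v : X, ⟪G u, v⟫ = ⟪u, G v⟫)
    (hGlb : ∀ u : X, μ * ‖u‖ ^ 2 ≤ ⟪u, G u⟫)
    (γ : ℝ) (hγ : 0 < γ) (hγG : γ * ‖G‖ ≤ 1)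
    (x0 : X) (hx0 : x0 ∈ domg)
    (xbar : X)
    (hxbar : xbar ∈ domg ∧ ∀ z ∈ domg, Theta f g fgrad G x0 xbar ≤ Theta f g fgrad G x0 z)
    (huniq : ∀ z ∈ domg, (∀ w ∈ domg, Theta f g fgrad G x0 z ≤ Theta f g fgrad G x0 w) → z = xbar)
    (p : X) (hp : IsProxPt γ (ContinuousLinearMap.id ℝ X) g domg (x0 - γ • fgrad x0) p) :
    ‖xbar - p‖ ≤ Real.sqrt ((1 - μ * γ) / (γ * μ)) * ‖xbar - x0‖ :=
  minimizer_prox_distance_general f g domg fgrad hgconv μ hμ G hGlb γ hγ hγG x0 xbar hxbar p hp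
end
end
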